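/- Suppose ℓ is even, k ≥ 1, h = k + ℓ/2 − 1, and G is a graph containing h vertices v₁,…,v_h each of degree at least (1 − 5/(6(h+1)))n, with n sufficiently large (n ≥ 8(h+1)³((ℓ²−ℓ+1)k + (ℓ²+3ℓ−2)/2)⁸). If additionally G contains h+1 such vertices of degree at least (1 − 5/(6(h+2)))n, then G contains kS_{ℓ−1} ∪ P_ℓ as a subgraph. -/

import Mathlib

/-! The `h + 1` vertices of degree at least `(1 - 5/(6(h+2)))n` miss together at most
`(h+1) · 5n/(6(h+2)) ≤ 5n/6` vertices, so they have at least `n/6` common neighbours. Hence `G`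
contains a complete bipartite graph with `k + ℓ/2` vertices on one side and `k(ℓ-1) + ⌈ℓ/2⌉` on
the other, and `kS_{ℓ-1} ∪ P_ℓ` embeds in it: the star centres and every second vertex of the
path go to the small side. -/

open SimpleGraph Finset

/-- `G` contains a copy of `H` (as a subgraph). -/
def Contains {α β : Type*} (G : SimpleGraph α) (H : SimpleGraph β) : Prop :=
  ∃ f : H →g G, Function.Injective f

/-- The star on `m` vertices with center `0` (so `m - 1` leaves), i.e. `S_{m-1}`. -/
def starGraph (m : ℕ) : SimpleGraph (Fin m) where
  Adj i j := i ≠ j ∧ ((i : ℕ) = 0 ∨ (j : ℕ) = 0)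
  symm := ⟨fun _ _ h => ⟨h.1.symm, h.2.symm⟩⟩
  loopless := ⟨fun _ h => h.1 rfl⟩

/-- `k` disjoint copies of a graph `G`. -/
def kCopies {α : Type*} (k : ℕ) (G : SimpleGraph α) : SimpleGraph (Fin k × α) where
  Adj x y := x.1 = y.1 ∧ G.Adj x.2 y.2
  symm := ⟨fun _ _ h => ⟨h.1.symm, h.2.symm⟩⟩
  loopless := ⟨fun _ h => G.loopless.irrefl _ h.2⟩

/-- The star-path forest `k·S_{ℓ-1} ∪ P_ℓ`. -/
def starPathForest (k ℓ : ℕ) : SimpleGraph (Fin k × Fin ℓ ⊕ Fin ℓ) :=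
  kCopies k (starGraph ℓ) ⊕g pathGraph ℓ

namespace SimpleGraph

variable {α β γ δ V W : Type*}

theorem contains_iff_isContained {G : SimpleGraph V} {H : SimpleGraph W} :
    Contains G H ↔ H ⊑ G :=
  ⟨fun ⟨f, hf⟩ => ⟨f.toCopy hf⟩, fun ⟨f⟩ => ⟨f.toHom, f.injective⟩⟩

theorem IsContained.sum {H₁ : SimpleGraph α} {G₁ : SimpleGraph β} {H₂ : SimpleGraph γ}
    {G₂ : SimpleGraph δ} : H₁ ⊑ G₁ → H₂ ⊑ G₂ → H₁ ⊕g H₂ ⊑ G₁ ⊕g G₂ := fun ⟨f⟩ ⟨g⟩ =>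
  ⟨(f.toHom.sum g.toHom).toCopy (Sum.map_injective.2 ⟨f.injective, g.injective⟩)⟩

theorem IsContained.kCopies {H : SimpleGraph α} {G : SimpleGraph β} (k : ℕ) :
    H ⊑ G → kCopies k H ⊑ kCopies k G := fun ⟨f⟩ =>
  ⟨⟨⟨Prod.map id f, fun h => ⟨h.1, f.toHom.map_adj h.2⟩⟩,
    Function.injective_id.prodMap f.injective⟩⟩

theorem sum_completeBipartiteGraph_isContained :
    completeBipartiteGraph α β ⊕g completeBipartiteGraph γ δ ⊑
      completeBipartiteGraph (α ⊕ γ) (β ⊕ δ) :=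
  ⟨⟨⟨Equiv.sumSumSumComm α β γ δ, by
    rintro ((a | b) | (c | d)) ((a' | b') | (c' | d')) <;> simp⟩,
    (Equiv.sumSumSumComm α β γ δ).injective⟩⟩

theorem kCopies_completeBipartiteGraph_isContained (k : ℕ) :
    kCopies k (completeBipartiteGraph α β) ⊑ completeBipartiteGraph (Fin k × α) (Fin k × β) :=
  ⟨⟨⟨Equiv.prodSumDistrib (Fin k) α β, by
    rintro ⟨i, a | b⟩ ⟨j, a' | b'⟩ <;> simp [kCopies]⟩,
    (Equiv.prodSumDistrib (Fin k) α β).injective⟩⟩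

theorem starGraph_isContained (m : ℕ) :
    _root_.starGraph m ⊑ completeBipartiteGraph Unit (Fin (m - 1)) := by
  let f : Fin m → Unit ⊕ Fin (m - 1) := fun j =>
    if hj : (j : ℕ) = 0 then .inl () else .inr ⟨j - 1, by omega⟩
  have hf : Function.Injective f := by
    intro i j hij
    simp only [f] at hij
    split_ifs at hij with hi hj hj <;> first | cases hij | simp at hij
    all_goals ext; omega
  refine ⟨⟨⟨f, ?_⟩, hf⟩⟩
  rintro i j ⟨hij, hi | hj⟩
  · have : (j : ℕ) ≠ 0 := fun h => hij (Fin.ext (by omega))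
    simp [f, hi, this]
  · have : (i : ℕ) ≠ 0 := fun h => hij (Fin.ext (by omega))
    simp [f, hj, this]

theorem pathGraph_isContained (m : ℕ) :
    pathGraph m ⊑ completeBipartiteGraph (Fin (m / 2)) (Fin ((m + 1) / 2)) := by
  let f : Fin m → Fin (m / 2) ⊕ Fin ((m + 1) / 2) := fun p =>
    if hp : (p : ℕ) % 2 = 1 then .inl ⟨p / 2, by omega⟩ else .inr ⟨p / 2, by omega⟩
  have hf : Function.Injective f := by
    intro p q hpq
    simp only [f] at hpq
    split_ifs at hpq with hp hq hq <;> first | cases hpq | simp at hpq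
    all_goals ext; omega
  refine ⟨⟨⟨f, ?_⟩, hf⟩⟩
  intro p q hpq
  rw [pathGraph_adj] at hpq
  by_cases hp : (p : ℕ) % 2 = 1 <;> by_cases hq : (q : ℕ) % 2 = 1 <;> simp [f, hp, hq] <;> omega

theorem starPathForest_isContained (k ℓ : ℕ) :
    starPathForest k ℓ ⊑ completeBipartiteGraph (Fin k × Unit ⊕ Fin (ℓ / 2))
      (Fin k × Fin (ℓ - 1) ⊕ Fin ((ℓ + 1) / 2)) :=
  ((((starGraph_isContained ℓ).kCopies k).trans (kCopies_completeBipartiteGraph_isContained k)).sum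
    (pathGraph_isContained ℓ)).trans sum_completeBipartiteGraph_isContained

theorem IsCompleteBetween.completeBipartiteGraph_isContained [Fintype α] [Fintype β]
    {G : SimpleGraph V} {s t : Finset V} (h : G.IsCompleteBetween s t)
    (hs : Fintype.card α ≤ #s) (ht : Fintype.card β ≤ #t) :
    completeBipartiteGraph α β ⊑ G := by
  obtain ⟨s', hs's, hs'⟩ := exists_subset_card_eq hs
  obtain ⟨t', ht't, ht'⟩ := exists_subset_card_eq ht
  exact completeBipartiteGraph_isContained_iff.2
    ⟨s', t', hs', ht', fun _ hv _ hw => h (hs's hv) (ht't hw)⟩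

section CommonNeighbors

variable [Fintype V] [DecidableEq V] (G : SimpleGraph V) [DecidableRel G.Adj]

def commonNeighborFinset (s : Finset V) : Finset V := s.inf (G.neighborFinset ·)

variable {G}

theorem mem_commonNeighborFinset {s : Finset V} {x : V} :
    x ∈ G.commonNeighborFinset s ↔ ∀ v ∈ s, G.Adj v x := by
  simp [commonNeighborFinset, Finset.mem_inf]

theorem isCompleteBetween_commonNeighborFinset (s : Finset V) :
    G.IsCompleteBetween s (G.commonNeighborFinset s) := fun _ hv _ hx =>
  mem_commonNeighborFinset.1 hx _ hv

theorem card_compl_commonNeighborFinset_le (s : Finset V) :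
    #(G.commonNeighborFinset s)ᶜ ≤ ∑ v ∈ s, (Fintype.card V - G.degree v) := by
  rw [commonNeighborFinset, Finset.compl_inf, sup_eq_biUnion]
  refine card_biUnion_le.trans (sum_le_sum fun v _ => ?_)
  rw [card_compl, card_neighborFinset_eq_degree]

theorem one_sub_mul_card_le_card_commonNeighborFinset {s : Finset V} {δ : ℝ}
    (hdeg : ∀ v ∈ s, (1 - δ) * Fintype.card V ≤ G.degree v) :
    (1 - #s * δ) * Fintype.card V ≤ #(G.commonNeighborFinset s) := by
  have hcompl : (Fintype.card V : ℝ) - #(G.commonNeighborFinset s) ≤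
      ∑ v ∈ s, ((Fintype.card V : ℝ) - G.degree v) :=
    calc (Fintype.card V : ℝ) - #(G.commonNeighborFinset s)
        = #(G.commonNeighborFinset s)ᶜ := by rw [card_compl, Nat.cast_sub (card_le_univ _)]
      _ ≤ (∑ v ∈ s, (Fintype.card V - G.degree v) : ℕ) := by
        exact_mod_cast card_compl_commonNeighborFinset_le s
      _ = ∑ v ∈ s, ((Fintype.card V : ℝ) - G.degree v) := by
        rw [Nat.cast_sum]
        exact sum_congr rfl fun v _ => Nat.cast_sub (G.degree_lt_card_verts v).le
  have hsum : ∑ v ∈ s, ((Fintype.card V : ℝ) - G.degree v) ≤ #s * δ * Fintype.card V := by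
    calc ∑ v ∈ s, ((Fintype.card V : ℝ) - G.degree v)
        ≤ ∑ _v ∈ s, δ * Fintype.card V := sum_le_sum fun v hv => by linarith [hdeg v hv]
      _ = #s * δ * Fintype.card V := by rw [sum_const, nsmul_eq_mul, mul_assoc]
  linarith

theorem card_le_six_mul_card_commonNeighborFinset {s : Finset V}
    (hdeg : ∀ v ∈ s, (1 - 5 / (6 * ((#s : ℝ) + 1))) * Fintype.card V ≤ G.degree v) :
    Fintype.card V ≤ 6 * #(G.commonNeighborFinset s) := by
  have hfrac : (#s : ℝ) * (5 / (6 * ((#s : ℝ) + 1))) ≤ 5 / 6 := by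
    rw [← mul_div_assoc, div_le_iff₀ (by positivity)]
    linarith
  have hcommon := one_sub_mul_card_le_card_commonNeighborFinset hdeg
  have hreal : (Fintype.card V : ℝ) ≤ 6 * #(G.commonNeighborFinset s) := by
    nlinarith [(Fintype.card V).cast_nonneg (α := ℝ)]
  exact_mod_cast hreal

end CommonNeighbors

end SimpleGraph

theorem Nat.mul_sub_one_add_succ_div_two_le (k ℓ : ℕ) :
    k * (ℓ - 1) + (ℓ + 1) / 2 ≤ (ℓ ^ 2 - ℓ + 1) * k + (ℓ ^ 2 + 3 * ℓ - 2) / 2 := by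
  have h₁ : ℓ - 1 ≤ ℓ ^ 2 - ℓ + 1 := by
    have : 2 * ℓ ≤ ℓ ^ 2 + 1 := by nlinarith [sq_nonneg ((ℓ : ℤ) - 1)]
    omega
  have h₂ : (ℓ + 1) / 2 ≤ (ℓ ^ 2 + 3 * ℓ - 2) / 2 := by
    have : ℓ ≤ ℓ ^ 2 := Nat.le_self_pow two_ne_zero ℓ
    omega
  rw [mul_comm _ k]
  gcongr

theorem star_path_forest_stmt15_general (n k ℓ h t : ℕ)
    (hh : h = k + ℓ / 2 - 1) (ht : t = (ℓ ^ 2 - ℓ + 1) * k + (ℓ ^ 2 + 3 * ℓ - 2) / 2)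
    (hn : 8 * (h + 1) ^ 3 * t ^ 8 ≤ n)
    (G : SimpleGraph (Fin n)) [DecidableRel G.Adj]
    (w : Fin (h + 1) → Fin n) (hw : Function.Injective w)
    (hwdeg : ∀ i, (1 - 5 / (6 * ((h : ℝ) + 2))) * n ≤ (G.degree (w i) : ℝ)) :
    Contains G (starPathForest k ℓ) := by
  classical
  set s := univ.image w
  have hs : #s = h + 1 := by rw [card_image_of_injective _ hw, card_univ, Fintype.card_fin]
  have hdeg : ∀ v ∈ s, (1 - 5 / (6 * ((#s : ℝ) + 1))) * Fintype.card (Fin n) ≤ G.degree v := by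
    intro v hv
    obtain ⟨i, -, rfl⟩ := mem_image.1 hv
    rw [hs, Fintype.card_fin, Nat.cast_succ, add_assoc, one_add_one_eq_two]
    exact hwdeg i
  have hcommon : n ≤ 6 * #(G.commonNeighborFinset s) := by
    simpa using card_le_six_mul_card_commonNeighborFinset hdeg
  have htn : 6 * t ≤ n :=
    calc 6 * t ≤ 8 * t ^ 8 := by linarith [Nat.le_self_pow (by norm_num : 8 ≠ 0) t]
      _ ≤ 8 * (h + 1) ^ 3 * t ^ 8 := by gcongr; exact Nat.le_mul_of_pos_right _ (by positivity)
      _ ≤ n := hn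
  have hleaves := ht ▸ Nat.mul_sub_one_add_succ_div_two_le k ℓ
  rw [contains_iff_isContained]
  refine (starPathForest_isContained k ℓ).trans
    ((isCompleteBetween_commonNeighborFinset s).completeBipartiteGraph_isContained ?_ ?_) <;>
  simp only [Fintype.card_sum, Fintype.card_prod, Fintype.card_fin, Fintype.card_unit, hs] <;>
  omega

/-- Suppose `ℓ` is even, `k ≥ 1`, `h = k + ℓ/2 − 1`, `t = (ℓ²−ℓ+1)k + (ℓ²+3ℓ−2)/2` and
`n ≥ 8(h+1)³t⁸`.  If a graph `G` of order `n` contains `h` (distinct) vertices each of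
degree at least `(1 − 5/(6(h+1)))n`, and moreover contains `h+1` (distinct) vertices each
of degree at least `(1 − 5/(6(h+2)))n`, then `G` contains `kS_{ℓ−1} ∪ P_ℓ`. -/
theorem star_path_forest_stmt15 (n k ℓ h t : ℕ) (hℓeven : Even ℓ) (hk : 1 ≤ k)
    (hh : h = k + ℓ / 2 - 1) (ht : t = (ℓ ^ 2 - ℓ + 1) * k + (ℓ ^ 2 + 3 * ℓ - 2) / 2)
    (hn : 8 * (h + 1) ^ 3 * t ^ 8 ≤ n)
    (G : SimpleGraph (Fin n)) [DecidableRel G.Adj]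
    (v : Fin h → Fin n) (hv : Function.Injective v)
    (hvdeg : ∀ i, (1 - 5 / (6 * ((h : ℝ) + 1))) * n ≤ (G.degree (v i) : ℝ))
    (w : Fin (h + 1) → Fin n) (hw : Function.Injective w)
    (hwdeg : ∀ i, (1 - 5 / (6 * ((h : ℝ) + 2))) * n ≤ (G.degree (w i) : ℝ)) :
    Contains G (starPathForest k ℓ) :=
  star_path_forest_stmt15_general n k ℓ h t hh ht hn G w hw hwdeg
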